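/- Let τ : S_n(ℂ) → S_m(ℂ) be a quantum channel with Kraus operators A_1,…,A_l and A(τ) := ∑_{i=1}^l A_i A_i^*. Then λ_1(A(τ)) ≥ n/m and σ_1(τ) ≥ √(n/m). In particular, if m ≤ n then λ_1(A(τ)) ≥ 1 and σ_1(τ) ≥ 1. -/

import Mathlib

open scoped ComplexOrder
open Matrix Kronecker

/-- Frobenius norm of a complex matrix: `√(tr (X Xᴴ))`. -/
noncomputable def frobNorm {n m : Type*} [Fintype n] [Fintype m]
    (X : Matrix n m ℂ) : ℝ :=
  Real.sqrt ((X * Xᴴ).trace.re)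

/-- Operator norm `σ₁(τ) = ‖τ‖` of a map between spaces of Hermitian matrices,
with respect to the Frobenius norm. -/
noncomputable def opNorm {n m : Type*} [Fintype n] [Fintype m]
    (τ : Matrix n n ℂ → Matrix m m ℂ) : ℝ :=
  sSup {c : ℝ | ∃ X : Matrix n n ℂ, X.IsHermitian ∧ frobNorm X ≤ 1 ∧ c = frobNorm (τ X)}

/-- The second singular value of a map between spaces of Hermitian matrices, via the
Courant–Fischer min-max characterization: the infimum over nonzero Hermitian `U` of the
norm of `τ` restricted to the orthogonal complement of `U`. -/
noncomputable def sigma2 {n m : Type*} [Fintype n] [Fintype m]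
    (τ : Matrix n n ℂ → Matrix m m ℂ) : ℝ :=
  sInf {c : ℝ | ∃ U : Matrix n n ℂ, U.IsHermitian ∧ U ≠ 0 ∧
    c = sSup {d : ℝ | ∃ X : Matrix n n ℂ, X.IsHermitian ∧ frobNorm X ≤ 1 ∧
      (U * X).trace.re = 0 ∧ d = frobNorm (τ X)}}

/-- Largest eigenvalue `λ₁` of a Hermitian matrix (junk value `0` otherwise). -/
noncomputable def lambdaMax {n : Type*} [Fintype n] [DecidableEq n]
    (Y : Matrix n n ℂ) : ℝ :=
  if hY : Y.IsHermitian then ⨆ i, hY.eigenvalues i else 0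

/-- von Neumann entropy `H(Y) = -∑ λᵢ log λᵢ` of a Hermitian matrix
(junk value `0` otherwise); note `Real.log 0 = 0`. -/
noncomputable def entropy {n : Type*} [Fintype n] [DecidableEq n]
    (Y : Matrix n n ℂ) : ℝ :=
  if hY : Y.IsHermitian then -∑ i, hY.eigenvalues i * Real.log (hY.eigenvalues i) else 0

/-- Minimum output entropy of a channel: the infimum of `H(τ X)` over density matrices `X`. -/
noncomputable def minEntropy {n m : Type*} [Fintype n] [DecidableEq n] [Fintype m] [DecidableEq m]
    (τ : Matrix n n ℂ → Matrix m m ℂ) : ℝ :=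
  sInf {h : ℝ | ∃ X : Matrix n n ℂ, X.PosSemidef ∧ X.trace = 1 ∧ h = entropy (τ X)}

/-- Eigenvalues of a Hermitian matrix arranged in decreasing order:
`eigsDesc Y 0 = λ₁ ≥ eigsDesc Y 1 = λ₂ ≥ …` (junk value `0` if not Hermitian). -/
noncomputable def eigsDesc {n : ℕ} (Y : Matrix (Fin n) (Fin n) ℂ) : Fin n → ℝ :=
  if hY : Y.IsHermitian then fun i => hY.eigenvalues (Tuple.sort hY.eigenvalues i.rev)
  else fun _ => 0

/-- The sum `λ₁ + ⋯ + λ_k` of the `k` largest eigenvalues of a Hermitian matrix. -/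
noncomputable def sumTopEigs {n : ℕ} (k : ℕ) (Y : Matrix (Fin n) (Fin n) ℂ) : ℝ :=
  ∑ i : Fin n, if (i : ℕ) < k then eigsDesc Y i else 0

/-! Testing `τ` on `I/√n` gives `σ₁(τ) ≥ ‖τ(I)‖/√n = ‖A(τ)‖/√n`. Cyclicity of the trace and
`∑ Aᵢ*Aᵢ = I` give `tr A(τ) = n`, so the largest eigenvalue of `A(τ)` is at least the mean
eigenvalue `n/m`, and Cauchy–Schwarz on the diagonal gives `‖A(τ)‖ ≥ tr A(τ)/√m = n/√m`. -/

attribute [local instance] Matrix.frobeniusNormedAddCommGroup Matrix.frobeniusNormedSpace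

section Frobenius

variable {k p : Type*} [Fintype k] [Fintype p]

lemma re_trace_mul_conjTranspose (X : Matrix k p ℂ) :
    (X * Xᴴ).trace.re = ∑ i, ∑ j, ‖X i j‖ ^ 2 := by
  simp only [trace, diag_apply, Matrix.mul_apply, conjTranspose_apply, RCLike.star_def,
    Complex.mul_conj, Complex.normSq_eq_norm_sq, Complex.re_sum, Complex.ofReal_re]

lemma frobNorm_eq_norm (X : Matrix k p ℂ) : frobNorm X = ‖X‖ := by
  rw [frobNorm, re_trace_mul_conjTranspose, Matrix.frobenius_norm_def, Real.sqrt_eq_rpow]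
  norm_cast

lemma frobenius_norm_sq_eq_sum (X : Matrix k p ℂ) : ‖X‖ ^ 2 = ∑ i, ∑ j, ‖X i j‖ ^ 2 := by
  rw [← frobNorm_eq_norm, frobNorm, Real.sq_sqrt (by rw [re_trace_mul_conjTranspose]; positivity),
    re_trace_mul_conjTranspose]

lemma re_trace_sq_le_card_mul_norm_sq (B : Matrix k k ℂ) :
    B.trace.re ^ 2 ≤ Fintype.card k * ‖B‖ ^ 2 := by
  have hdiag : ∑ i, (B i i).re ^ 2 ≤ ‖B‖ ^ 2 := by
    rw [frobenius_norm_sq_eq_sum]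
    gcongr with i
    calc (B i i).re ^ 2 ≤ ‖B i i‖ ^ 2 :=
          sq_le_sq.2 ((Complex.abs_re_le_norm _).trans_eq (abs_norm _).symm)
      _ ≤ ∑ j, ‖B i j‖ ^ 2 :=
          Finset.single_le_sum (f := fun j => ‖B i j‖ ^ 2) (fun _ _ => by positivity)
            (Finset.mem_univ i)
  calc B.trace.re ^ 2 = (∑ i, (B i i).re) ^ 2 := by simp [Matrix.trace, Complex.re_sum]
    _ ≤ Fintype.card k * ∑ i, (B i i).re ^ 2 := sq_sum_le_card_mul_sum_sq
    _ ≤ Fintype.card k * ‖B‖ ^ 2 := by gcongr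

lemma abs_re_trace_le_sqrt_card_mul_norm (B : Matrix k k ℂ) :
    |B.trace.re| ≤ √(Fintype.card k) * ‖B‖ := by
  rw [← Real.sqrt_sq (norm_nonneg B), ← Real.sqrt_mul (Nat.cast_nonneg _)]
  exact Real.abs_le_sqrt (re_trace_sq_le_card_mul_norm_sq B)

end Frobenius

section OpNorm

variable {k p : Type*} [Fintype k] [Fintype p]

lemma bddAbove_opNorm_set (τ : Matrix k k ℂ →ₗ[ℝ] Matrix p p ℂ) :
    BddAbove {c : ℝ | ∃ X : Matrix k k ℂ, X.IsHermitian ∧ frobNorm X ≤ 1 ∧ c = frobNorm (τ X)} := by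
  obtain ⟨C, hC, hτ⟩ := (LinearMap.toContinuousLinearMap τ).bound
  refine ⟨C, ?_⟩
  rintro _ ⟨X, -, hX, rfl⟩
  rw [frobNorm_eq_norm] at hX ⊢
  calc ‖τ X‖ ≤ C * ‖X‖ := hτ X
    _ ≤ C := mul_le_of_le_one_right hC.le hX

lemma frobNorm_le_opNorm (τ : Matrix k k ℂ →ₗ[ℝ] Matrix p p ℂ) {X : Matrix k k ℂ}
    (hX : X.IsHermitian) (hX1 : frobNorm X ≤ 1) : frobNorm (τ X) ≤ opNorm τ :=
  le_csSup (bddAbove_opNorm_set τ) ⟨X, hX, hX1, rfl⟩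

lemma norm_apply_one_div_sqrt_card_le_opNorm [DecidableEq k]
    (τ : Matrix k k ℂ →ₗ[ℝ] Matrix p p ℂ) :
    ‖τ 1‖ / √(Fintype.card k) ≤ opNorm τ := by
  set r : ℝ := (√(Fintype.card k))⁻¹
  have hr : 0 ≤ r := by positivity
  have hX : (r • (1 : Matrix k k ℂ)).IsHermitian := by
    simp [Matrix.IsHermitian, Matrix.conjTranspose_smul]
  have hX1 : frobNorm (r • (1 : Matrix k k ℂ)) ≤ 1 := by
    rw [frobNorm_eq_norm, norm_smul, ← coe_nnnorm (1 : Matrix k k ℂ), Matrix.frobenius_nnnorm_one]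
    simpa [r, abs_of_nonneg] using inv_mul_le_one_of_le₀ le_rfl (Real.sqrt_nonneg _)
  calc ‖τ 1‖ / √(Fintype.card k) = frobNorm (τ (r • 1)) := by
        rw [map_smul, frobNorm_eq_norm, norm_smul, Real.norm_of_nonneg hr, div_eq_inv_mul]
    _ ≤ opNorm τ := frobNorm_le_opNorm τ hX hX1

end OpNorm

lemma Matrix.IsHermitian.re_trace_div_card_le_lambdaMax {k : Type*} [Fintype k] [DecidableEq k]
    [Nonempty k] {B : Matrix k k ℂ} (hB : B.IsHermitian) :
    B.trace.re / Fintype.card k ≤ lambdaMax B := by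
  rw [lambdaMax, dif_pos hB, div_le_iff₀ (by exact_mod_cast Fintype.card_pos),
    hB.trace_eq_sum_eigenvalues, Complex.re_sum]
  calc ∑ i, hB.eigenvalues i ≤ ∑ _i : k, ⨆ j, hB.eigenvalues j :=
        Finset.sum_le_sum fun i _ => le_ciSup (Set.finite_range _).bddAbove i
    _ = (⨆ j, hB.eigenvalues j) * Fintype.card k := by simp [mul_comm]

section Kraus

variable {ι k p : Type*} [Fintype ι] [Fintype k]

def krausMap (A : ι → Matrix p k ℂ) : Matrix k k ℂ →ₗ[ℂ] Matrix p p ℂ where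
  toFun X := ∑ i, A i * X * (A i)ᴴ
  map_add' X Y := by simp only [Matrix.mul_add, Matrix.add_mul, Finset.sum_add_distrib]
  map_smul' c X := by
    simp only [Matrix.mul_smul, Matrix.smul_mul, Finset.smul_sum, RingHom.id_apply]

lemma krausMap_apply (A : ι → Matrix p k ℂ) (X : Matrix k k ℂ) :
    krausMap A X = ∑ i, A i * X * (A i)ᴴ :=
  rfl

lemma isHermitian_sum_mul_conjTranspose (A : ι → Matrix p k ℂ) :
    (∑ i, A i * (A i)ᴴ).IsHermitian :=
  isSelfAdjoint_sum _ fun i _ => isHermitian_mul_conjTranspose_self (A i)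

lemma trace_sum_mul_conjTranspose [Fintype p] [DecidableEq k] {A : ι → Matrix p k ℂ}
    (hA : ∑ i, (A i)ᴴ * A i = 1) : (∑ i, A i * (A i)ᴴ).trace = Fintype.card k := by
  simp_rw [Matrix.trace_sum, Matrix.trace_mul_comm (A _), ← Matrix.trace_sum, hA, Matrix.trace_one]

lemma card_div_card_le_lambdaMax [Fintype p] [DecidableEq p] [Nonempty p] [DecidableEq k]
    {A : ι → Matrix p k ℂ} (hA : ∑ i, (A i)ᴴ * A i = 1) :
    (Fintype.card k : ℝ) / Fintype.card p ≤ lambdaMax (∑ i, A i * (A i)ᴴ) := by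
  simpa [trace_sum_mul_conjTranspose hA] using
    (isHermitian_sum_mul_conjTranspose A).re_trace_div_card_le_lambdaMax

lemma sqrt_card_div_card_le_opNorm_krausMap [Fintype p] [DecidableEq k]
    {A : ι → Matrix p k ℂ} (hA : ∑ i, (A i)ᴴ * A i = 1) :
    √((Fintype.card k : ℝ) / Fintype.card p) ≤ opNorm (krausMap A) := by
  set B := ∑ i, A i * (A i)ᴴ
  have hB : (Fintype.card k : ℝ) ≤ √(Fintype.card p) * ‖B‖ := by
    simpa [B, trace_sum_mul_conjTranspose hA] using abs_re_trace_le_sqrt_card_mul_norm B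
  calc √((Fintype.card k : ℝ) / Fintype.card p)
      = Fintype.card k / √(Fintype.card p) / √(Fintype.card k) := by
        rw [Real.sqrt_div' _ (Nat.cast_nonneg _), div_right_comm, Real.div_sqrt]
    _ ≤ ‖B‖ / √(Fintype.card k) := by
        gcongr
        exact div_le_of_le_mul₀ (Real.sqrt_nonneg _) (norm_nonneg _) (hB.trans_eq (mul_comm _ _))
    _ ≤ opNorm (krausMap A) := by
        simpa [B, krausMap_apply] using
          norm_apply_one_div_sqrt_card_le_opNorm ((krausMap A).restrictScalars ℝ)

end Kraus

/-- For a quantum channel τ : Sₙ(ℂ) → Sₘ(ℂ) with A(τ) = ∑ᵢ Aᵢ Aᵢ*,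
one has λ₁(A(τ)) ≥ n/m and σ₁(τ) ≥ √(n/m); in particular, if m ≤ n then
λ₁(A(τ)) ≥ 1 and σ₁(τ) ≥ 1. -/
theorem stmt_10 {n m l : ℕ} (hm : 0 < m) (A : Fin l → Matrix (Fin m) (Fin n) ℂ)
    (hA : ∑ i, (A i)ᴴ * A i = 1) :
    (n : ℝ) / m ≤ lambdaMax (∑ i, A i * (A i)ᴴ) ∧
    Real.sqrt ((n : ℝ) / m) ≤ opNorm (fun (X : Matrix (Fin n) (Fin n) ℂ) => ∑ i, A i * X * (A i)ᴴ) ∧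
    (m ≤ n → 1 ≤ lambdaMax (∑ i, A i * (A i)ᴴ) ∧
      1 ≤ opNorm (fun (X : Matrix (Fin n) (Fin n) ℂ) => ∑ i, A i * X * (A i)ᴴ)) := by
  have : NeZero m := ⟨hm.ne'⟩
  have hlam : (n : ℝ) / m ≤ lambdaMax (∑ i, A i * (A i)ᴴ) := by
    simpa using card_div_card_le_lambdaMax hA
  have hop : √((n : ℝ) / m) ≤ opNorm (krausMap A) := by
    simpa using sqrt_card_div_card_le_opNorm_krausMap hA
  refine ⟨hlam, hop, fun hmn => ?_⟩
  have hone : (1 : ℝ) ≤ n / m := by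
    rw [one_le_div₀ (by exact_mod_cast hm)]
    exact_mod_cast hmn
  exact ⟨hone.trans hlam, (Real.one_le_sqrt.2 hone).trans hop⟩
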